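/- Let n be a nonnegative integer, k ≥ 0, and let ε be an integer with 0 ≤ ε ≤ δ_k(n). Then ∂^k(n − ε) = ∂^k(n). -/
import Mathlib


/-- Fold a function `g` over the terms `(a_t, t)` of the unique Macaulay-type
representation `n = C(a_{k+1}, k+1) + ⋯ + C(a_i, i)` with
`a_{k+1} > ⋯ > a_i ≥ i ≥ 1`, computed greedily: at each level `t` (from `k+1`
down), `a_t` is the largest `a` with `C(a, t) ≤` the current remainder. -/
def macRepFold (g : ℕ → ℕ → ℕ) : ℕ → ℕ → ℕ
  | 0, _ => 0
  | t + 1, n =>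
    if n = 0 then 0
    else
      let a := Nat.findGreatest (fun a => Nat.choose a (t + 1) ≤ n) (n + t + 1)
      g a (t + 1) + macRepFold g t (n - Nat.choose a (t + 1))

/-- The combinatorial shadow function `∂_k(n) = Σ_t C(a_t, t - 1)`. -/
def partialLower (k n : ℕ) : ℕ := macRepFold (fun a t => Nat.choose a (t - 1)) (k + 1) n

/-- The combinatorial shadow function `∂^k(n) = Σ_t C(a_t - 1, t)`. -/
def partialUpper (k n : ℕ) : ℕ := macRepFold (fun a t => Nat.choose (a - 1) t) (k + 1) n

/-- The error function `δ_k(n) = #{t : a_t = t}`. -/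
def deltaErr (k n : ℕ) : ℕ := macRepFold (fun a t => if a = t then 1 else 0) (k + 1) n

/-- The function `d^k(n) = Σ_t C(a_t + 1, t)`. -/
def dUpper (k n : ℕ) : ℕ := macRepFold (fun a t => Nat.choose (a + 1) t) (k + 1) n

lemma macRepFold_zero (g : ℕ → ℕ → ℕ) (t : ℕ) : macRepFold g t 0 = 0 := by
  cases t <;> simp [macRepFold]

lemma macRepFold_step (g : ℕ → ℕ → ℕ) (t n : ℕ) (hn : n ≠ 0) :
    macRepFold g (t + 1) n =
      g (Nat.findGreatest (fun a => Nat.choose a (t + 1) ≤ n) (n + t + 1)) (t + 1) +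
        macRepFold g t
          (n - Nat.choose (Nat.findGreatest (fun a => Nat.choose a (t + 1) ≤ n) (n + t + 1)) (t + 1)) := by
  simp [macRepFold, hn]

lemma sub_le_choose (t : ℕ) : ∀ a : ℕ, a - t ≤ Nat.choose a (t + 1) := by
  induction t with
  | zero => intro a; simp
  | succ t ih =>
    intro a
    cases a with
    | zero => simp
    | succ a =>
      calc a + 1 - (t + 1) = a - t := by omega
        _ ≤ Nat.choose a (t + 1) := ih a
        _ ≤ Nat.choose (a + 1) (t + 2) := by
            rw [Nat.choose_succ_succ]; exact Nat.le_add_right _ _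


lemma findGreatest_small (t n : ℕ) (h1 : 1 ≤ n) (h2 : n ≤ t + 1) :
    Nat.findGreatest (fun a => Nat.choose a (t + 1) ≤ n) (n + t + 1) = t + 1 := by
  rw [Nat.findGreatest_eq_iff]
  refine ⟨by omega, fun _ => by simp; omega, fun m hm hm' hP => ?_⟩
  have : Nat.choose (t + 2) (t + 1) ≤ Nat.choose m (t + 1) :=
    Nat.choose_le_choose _ (by omega)
  rw [Nat.choose_succ_self_right] at this
  omega

lemma fold_small_upper : ∀ t n, n ≤ t →
    macRepFold (fun a t => Nat.choose (a - 1) t) t n = 0 := by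
  intro t
  induction t with
  | zero => intro n _; simp [macRepFold]
  | succ t ih =>
    intro n hn
    rcases Nat.eq_zero_or_pos n with h | h
    · simp [h, macRepFold_zero]
    · rw [macRepFold_step _ _ _ (by omega), findGreatest_small t n h hn]
      simp only [Nat.choose_succ_self_right, Nat.add_sub_cancel, Nat.choose_self]
      rw [Nat.choose_succ_self, ih (n - 1) (by omega)]

lemma fold_small_delta : ∀ t n, n ≤ t →
    macRepFold (fun a t => if a = t then 1 else 0) t n = n := by
  intro t
  induction t with
  | zero => intro n hn; interval_cases n; simp [macRepFold]
  | succ t ih =>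
    intro n hn
    rcases Nat.eq_zero_or_pos n with h | h
    · simp [h, macRepFold_zero]
    · rw [macRepFold_step _ _ _ (by omega), findGreatest_small t n h hn]
      simp only [Nat.choose_self, if_pos rfl]
      rw [ih (n - 1) (by omega)]
      simp
      omega

lemma step_main : ∀ t n, 1 ≤ macRepFold (fun a t => if a = t then 1 else 0) t n →
    macRepFold (fun a t => Nat.choose (a - 1) t) t (n - 1) =
        macRepFold (fun a t => Nat.choose (a - 1) t) t n ∧
      macRepFold (fun a t => if a = t then 1 else 0) t (n - 1) + 1 =
        macRepFold (fun a t => if a = t then 1 else 0) t n := by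
  intro t
  induction t with
  | zero => intro n h; simp [macRepFold] at h
  | succ t ih =>
    intro n hδ
    have hn : n ≠ 0 := by
      rintro rfl; rw [macRepFold_zero] at hδ; omega
    set P : ℕ → Prop := fun a => Nat.choose a (t + 1) ≤ n with hP
    set A := Nat.findGreatest P (n + t + 1) with hA
    have hAge : t + 1 ≤ A := Nat.le_findGreatest (by omega) (by simp [P]; omega)
    have hAspec : Nat.choose A (t + 1) ≤ n := Nat.findGreatest_spec (P := P) (m := t + 1) (by omega) (by simp [P]; omega)
    rcases eq_or_lt_of_le hAge with hcase | hcase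
    · -- A = t + 1 : all terms are trailing ones, n ≤ t + 1
      have hnle : n ≤ t + 1 := by
        by_contra hgt
        have := Nat.findGreatest_is_greatest (P := P) (k := t + 2) (n := n + t + 1)
          (by omega) (by omega)
        simp [P, Nat.choose_succ_self_right] at this
        omega
      have h1 : 1 ≤ n := by omega
      constructor
      · rw [fold_small_upper _ _ (by omega), fold_small_upper _ _ hnle]
      · rw [fold_small_delta _ _ (by omega), fold_small_delta _ _ hnle]
        omega
    · -- A ≥ t + 2
      have hrpos : 1 ≤ n - Nat.choose A (t + 1) := by
        by_contra hr
        have hr0 : n - Nat.choose A (t + 1) = 0 := by omega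
        rw [macRepFold_step _ _ _ hn, ← hA, hr0, macRepFold_zero] at hδ
        have : ¬ (A = t + 1) := by omega
        simp [this] at hδ
      have hchooselt : Nat.choose A (t + 1) < n := by
        have : 1 ≤ Nat.choose A (t+1) := Nat.choose_pos (by omega)
        omega
      have hAle : A ≤ n + t := by
        have := sub_le_choose t A
        omega
      -- the greedy choice for n - 1 is also A
      have hfind : Nat.findGreatest (fun a => Nat.choose a (t + 1) ≤ n - 1) (n - 1 + t + 1) = A := by
        rw [Nat.findGreatest_eq_iff]
        refine ⟨by omega, fun _ => by omega, fun m hm hm' hPm => ?_⟩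
        have := Nat.findGreatest_is_greatest (P := P) (k := m) (n := n + t + 1)
          (by omega) (by omega)
        simp [P] at this
        omega
      have hδr : 1 ≤ macRepFold (fun a t => if a = t then 1 else 0) t (n - Nat.choose A (t + 1)) := by
        rw [macRepFold_step _ _ _ hn, ← hA] at hδ
        have : ¬ (A = t + 1) := by omega
        simpa [this] using hδ
      obtain ⟨ihu, ihd⟩ := ih _ hδr
      have hsub : n - 1 - Nat.choose A (t + 1) = n - Nat.choose A (t + 1) - 1 := by omega
      constructor
      · rw [macRepFold_step _ _ _ hn, macRepFold_step _ _ _ (by omega), hfind, ← hA, hsub, ihu]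
      · rw [macRepFold_step _ _ _ hn, macRepFold_step _ _ _ (by omega), hfind, ← hA, hsub]
        omega


/-- For `0 ≤ ε ≤ δ_k(n)` one has `∂^k(n − ε) = ∂^k(n)`. -/
theorem partialUpper_sub_eq (k n ε : ℕ) (hε : ε ≤ deltaErr k n) :
    partialUpper k (n - ε) = partialUpper k n := by
  induction ε generalizing n with
  | zero => simp
  | succ ε ih =>
    have hδ : 1 ≤ macRepFold (fun a t => if a = t then 1 else 0) (k + 1) n := by
      have := hε; unfold deltaErr at this; omega
    obtain ⟨hu, hd⟩ := step_main (k + 1) n hδ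
    have h1 : n - (ε + 1) = n - 1 - ε := by omega
    have h2 : ε ≤ deltaErr k (n - 1) := by
      unfold deltaErr at *; omega
    rw [h1, ih _ h2]
    exact hu
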